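/- arXiv:1808.05419 — 3 statements merged into one kernel-verified Lean document; each statement's English description precedes it below -/
import Mathlib

section
/- The logarithmic mean LM : (0,∞)² → (0,∞) is jointly concave, positively homogeneous (LM(λs, λt) = λ·LM(s,t) for λ > 0), and monotone increasing in each argument. -/
/-!
The logarithmic mean is an integral of weighted geometric means:
`LM(s,t) = ∫₀¹ s^u t^(1-u) du`. For each fixed `u ∈ [0,1]` the integrand is jointly concave,
positively homogeneous and monotone in each argument, and all three properties survive
integration over `u`.
-/

open Real Set intervalIntegral

/-- The logarithmic mean: `LM(s,t) = (s - t)/(log s - log t)` for `s ≠ t`, `LM(s,s) = s`. -/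
noncomputable def logMean (s t : ℝ) : ℝ :=
  if s = t then s else (s - t) / (Real.log s - Real.log t)

theorem ConcaveOn.intervalIntegral {E : Type*} [AddCommGroup E] [Module ℝ E] {s : Set E}
    {f : ℝ → E → ℝ} {a b : ℝ} (hab : a ≤ b) (hf : ∀ u ∈ Icc a b, ConcaveOn ℝ s (f u))
    (hint : ∀ x ∈ s, IntervalIntegrable (fun u => f u x) MeasureTheory.volume a b) :
    ConcaveOn ℝ s (fun x => ∫ u in a..b, f u x) := by
  refine ⟨(hf a ⟨le_rfl, hab⟩).1, fun x hx y hy α β hα hβ hαβ => ?_⟩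
  have hxy : α • x + β • y ∈ s := (hf a ⟨le_rfl, hab⟩).1 hx hy hα hβ hαβ
  simp only [smul_eq_mul]
  rw [← integral_const_mul, ← integral_const_mul,
    ← integral_add ((hint x hx).const_mul α) ((hint y hy).const_mul β)]
  exact integral_mono_on hab (((hint x hx).const_mul α).add ((hint y hy).const_mul β))
    (hint _ hxy) fun u hu => (hf u hu).2 hx hy hα hβ hαβ

section WeightedGeomMean

variable {u : ℝ}

theorem mul_rpow_mul_rpow_one_sub {a s t : ℝ} (ha : 0 ≤ a) (hs : 0 ≤ s) (ht : 0 ≤ t) :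
    (a * s) ^ u * (a * t) ^ (1 - u) = a * (s ^ u * t ^ (1 - u)) := by
  have ha_pow : a ^ u * a ^ (1 - u) = a := by
    rw [← rpow_add' ha (by norm_num)]; simp
  rw [mul_rpow ha hs, mul_rpow ha ht]
  linear_combination s ^ u * t ^ (1 - u) * ha_pow

/-- Tangent-plane inequality for the weighted geometric mean: weighted AM-GM applied to
`p₁/q₁` and `p₂/q₂`. -/
theorem rpow_mul_rpow_one_sub_le (hu0 : 0 ≤ u) (hu1 : u ≤ 1) {p₁ p₂ q₁ q₂ : ℝ}
    (hp₁ : 0 ≤ p₁) (hp₂ : 0 ≤ p₂) (hq₁ : 0 < q₁) (hq₂ : 0 < q₂) :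
    p₁ ^ u * p₂ ^ (1 - u) ≤ q₁ ^ u * q₂ ^ (1 - u) * (u * (p₁ / q₁) + (1 - u) * (p₂ / q₂)) := by
  have hsplit : p₁ ^ u * p₂ ^ (1 - u) =
      q₁ ^ u * q₂ ^ (1 - u) * ((p₁ / q₁) ^ u * (p₂ / q₂) ^ (1 - u)) := by
    rw [div_rpow hp₁ hq₁.le, div_rpow hp₂ hq₂.le]
    field_simp
  rw [hsplit]
  gcongr
  exact geom_mean_le_arith_mean2_weighted hu0 (by linarith) (by positivity) (by positivity)
    (by ring)

theorem concaveOn_rpow_mul_rpow_one_sub (hu0 : 0 ≤ u) (hu1 : u ≤ 1) :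
    ConcaveOn ℝ (Ioi 0 ×ˢ Ioi 0) (fun p : ℝ × ℝ => p.1 ^ u * p.2 ^ (1 - u)) := by
  refine ⟨(convex_Ioi 0).prod (convex_Ioi 0), fun p hp p' hp' a b ha hb hab => ?_⟩
  have hq := ((convex_Ioi 0).prod (convex_Ioi 0)) hp hp' ha hb hab
  simp only [mem_prod, mem_Ioi, Prod.fst_add, Prod.snd_add, Prod.smul_fst, Prod.smul_snd,
    smul_eq_mul] at hp hp' hq ⊢
  set q₁ := a * p.1 + b * p'.1
  set q₂ := a * p.2 + b * p'.2
  have h := rpow_mul_rpow_one_sub_le hu0 hu1 (p₁ := a * p.1) (p₂ := a * p.2)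
    (mul_nonneg ha hp.1.le) (mul_nonneg ha hp.2.le) hq.1 hq.2
  have h' := rpow_mul_rpow_one_sub_le hu0 hu1 (p₁ := b * p'.1) (p₂ := b * p'.2)
    (mul_nonneg hb hp'.1.le) (mul_nonneg hb hp'.2.le) hq.1 hq.2
  rw [mul_rpow_mul_rpow_one_sub ha hp.1.le hp.2.le] at h
  rw [mul_rpow_mul_rpow_one_sub hb hp'.1.le hp'.2.le] at h'
  calc a * (p.1 ^ u * p.2 ^ (1 - u)) + b * (p'.1 ^ u * p'.2 ^ (1 - u))
      ≤ q₁ ^ u * q₂ ^ (1 - u) * (u * (q₁ / q₁) + (1 - u) * (q₂ / q₂)) := by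
        rw [show q₁ / q₁ = a * p.1 / q₁ + b * p'.1 / q₁ from add_div _ _ _,
          show q₂ / q₂ = a * p.2 / q₂ + b * p'.2 / q₂ from add_div _ _ _]
        linarith
    _ = q₁ ^ u * q₂ ^ (1 - u) := by
        rw [div_self hq.1.ne', div_self hq.2.ne']; ring

end WeightedGeomMean

theorem continuous_rpow_mul_rpow_one_sub {s t : ℝ} (hs : s ≠ 0) (ht : t ≠ 0) :
    Continuous fun u : ℝ => s ^ u * t ^ (1 - u) := by
  fun_prop (disch := assumption)

theorem logMean_eq_integral {s t : ℝ} (hs : 0 < s) (ht : 0 < t) :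
    logMean s t = ∫ u in (0 : ℝ)..1, s ^ u * t ^ (1 - u) := by
  have hexp : ∀ u : ℝ, s ^ u * t ^ (1 - u) = exp ((log s - log t) * u) * t := by
    intro u
    rw [rpow_def_of_pos hs, rpow_def_of_pos ht, ← exp_add,
      show log s * u + log t * (1 - u) = (log s - log t) * u + log t by ring, exp_add, exp_log ht]
  simp only [hexp, integral_mul_const]
  by_cases hst : s = t
  · subst hst
    simp [logMean]
  have hc : log s - log t ≠ 0 := fun h => hst (log_injOn_pos hs ht (sub_eq_zero.1 h))
  rw [integral_comp_mul_left (fun x => exp x) hc, integral_exp, mul_zero, mul_one, exp_zero,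
    exp_sub, exp_log hs, exp_log ht, logMean, if_neg hst, smul_eq_mul]
  field_simp

theorem logMean_le_logMean {s t s' t' : ℝ} (hs : 0 < s) (ht : 0 < t) (hs' : 0 < s')
    (ht' : 0 < t') (h : ∀ u ∈ Icc (0 : ℝ) 1, s ^ u * t ^ (1 - u) ≤ s' ^ u * t' ^ (1 - u)) :
    logMean s t ≤ logMean s' t' := by
  rw [logMean_eq_integral hs ht, logMean_eq_integral hs' ht']
  exact integral_mono_on zero_le_one
    ((continuous_rpow_mul_rpow_one_sub hs.ne' ht.ne').intervalIntegrable _ _)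
    ((continuous_rpow_mul_rpow_one_sub hs'.ne' ht'.ne').intervalIntegrable _ _) h

theorem stmt_3 :
    ConcaveOn ℝ (Set.Ioi (0:ℝ) ×ˢ Set.Ioi (0:ℝ)) (fun p : ℝ × ℝ => logMean p.1 p.2) ∧
    (∀ lam s t : ℝ, 0 < lam → 0 < s → 0 < t →
      logMean (lam * s) (lam * t) = lam * logMean s t) ∧
    (∀ s s' t : ℝ, 0 < s → s ≤ s' → 0 < t → logMean s t ≤ logMean s' t) ∧
    (∀ s t t' : ℝ, 0 < s → 0 < t → t ≤ t' → logMean s t ≤ logMean s t') := by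
  refine ⟨?concave, ?homogeneous, ?mono_left, ?mono_right⟩
  case concave =>
    refine (ConcaveOn.intervalIntegral zero_le_one
      (fun u hu => concaveOn_rpow_mul_rpow_one_sub hu.1 hu.2)
      fun p hp => (continuous_rpow_mul_rpow_one_sub hp.1.ne' hp.2.ne').intervalIntegrable _ _
      ).congr fun p hp => (logMean_eq_integral hp.1 hp.2).symm
  case homogeneous =>
    intro lam s t hlam hs ht
    rw [logMean_eq_integral (mul_pos hlam hs) (mul_pos hlam ht), logMean_eq_integral hs ht,
      ← integral_const_mul]
    simp only [mul_rpow_mul_rpow_one_sub hlam.le hs.le ht.le]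
  case mono_left =>
    intro s s' t hs hss' ht
    refine logMean_le_logMean hs ht (hs.trans_le hss') ht fun u hu => ?_
    gcongr
    exact hu.1
  case mono_right =>
    intro s t t' hs ht htt'
    refine logMean_le_logMean hs ht hs (ht.trans_le htt') fun u hu => ?_
    gcongr
    exact sub_nonneg.2 hu.2
end

section
/- Talagrand from log-Sobolev along the flow (scalar form): let E : [0,∞) → [0,∞) be absolutely continuous, nonincreasing, with E'(t) = -I(t) a.e. and E(t) ≤ I(t)/(2K) a.e. for some K > 0, and with E(t) → 0 as t → ∞. Then ∫₀^∞ I(t)^{1/2} dt ≤ (2/K)^{1/2} E(0)^{1/2}. -/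
/-!
Since `E = E 0 - ∫ I` is absolutely continuous and `√` is Lipschitz away from `0`, the function
`√(E + ε)` is absolutely continuous with derivative `-I / (2√(E + ε))` almost everywhere, so
`∫₀ᵀ I / (2√(E + ε)) ≤ √(E 0 + ε)`. The log-Sobolev inequality `2K E ≤ I` gives pointwise
`√I ≤ √(2/K) · I / (2√(E + ε)) + √(2Kε)`, hence `∫₀ᵀ √I ≤ √(2/K) √(E 0 + ε) + T √(2Kε)`.
Let `ε → 0`, then `T → ∞`.
-/

open MeasureTheory Set Filter Topology
open scoped NNReal

theorem LipschitzOnWith.comp_absolutelyContinuousOnInterval {X Y : Type*} [PseudoMetricSpace X]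
    [PseudoMetricSpace Y] {g : X → Y} {f : ℝ → X} {K : ℝ≥0} {s : Set X} {a b : ℝ}
    (hg : LipschitzOnWith K g s) (hf : AbsolutelyContinuousOnInterval f a b)
    (hfs : MapsTo f (uIcc a b) s) :
    AbsolutelyContinuousOnInterval (g ∘ f) a b := by
  refine squeeze_zero' (Eventually.of_forall fun _ => Finset.sum_nonneg fun _ _ => dist_nonneg)
    ?_ (by simpa using Tendsto.const_mul (K : ℝ) hf)
  filter_upwards [mem_inf_of_right (mem_principal_self _)] with E hE
  rw [Finset.mul_sum]
  exact Finset.sum_le_sum fun i hi =>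
    hg.dist_le_mul _ (hfs (hE.1 i hi).1) _ (hfs (hE.1 i hi).2)

theorem intervalIntegral.integral_comp_primitive_mul_eq_sub {φ φ' f : ℝ → ℝ}
    {s : Set ℝ} {K : ℝ≥0} {a b : ℝ} (hφ : LipschitzOnWith K φ s)
    (hφ' : ∀ y ∈ s, HasDerivAt φ (φ' y) y) (hf : IntervalIntegrable f volume a b)
    (hs : ∀ t ∈ uIcc a b, ∫ u in a..t, f u ∈ s) :
    ∫ t in a..b, φ' (∫ u in a..t, f u) * f t = φ (∫ u in a..b, f u) - φ 0 := by
  have hF := hf.absolutelyContinuousOnInterval_intervalIntegral (c := a) left_mem_uIcc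
  calc ∫ t in a..b, φ' (∫ u in a..t, f u) * f t
      = ∫ t in a..b, deriv (φ ∘ fun x => ∫ u in a..x, f u) t := by
        refine intervalIntegral.integral_congr_ae ?_
        filter_upwards [hf.ae_hasDerivAt_integral] with x hx hxab
        have hx' := uIoc_subset_uIcc hxab
        exact ((hφ' _ (hs x hx')).comp x (hx hx' a left_mem_uIcc)).deriv.symm
    _ = φ (∫ u in a..b, f u) - φ 0 := by
        rw [(hφ.comp_absolutelyContinuousOnInterval hF hs).integral_deriv_eq_sub]
        simp

theorem Real.lipschitzOnWith_sqrt_Ici {ε : ℝ} (hε : 0 < ε) :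
    LipschitzOnWith (Real.toNNReal (2 * √ε)⁻¹) Real.sqrt (Ici ε) := by
  refine .of_dist_le_mul fun x hx y hy => ?_
  have hx' := Real.sqrt_le_sqrt (mem_Ici.1 hx)
  have hy' := Real.sqrt_le_sqrt (mem_Ici.1 hy)
  have hsε : 0 < √ε := Real.sqrt_pos.2 hε
  have hprod : |√x - √y| * (√x + √y) = |x - y| := by
    rw [← abs_of_pos (by linarith : 0 < √x + √y), ← abs_mul]
    congr 1
    linear_combination Real.sq_sqrt (hε.le.trans (mem_Ici.1 hx)) -
      Real.sq_sqrt (hε.le.trans (mem_Ici.1 hy))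
  rw [Real.coe_toNNReal _ (by positivity), Real.dist_eq, Real.dist_eq, inv_mul_eq_div,
    le_div_iff₀ (by positivity), ← hprod]
  gcongr
  linarith

theorem Real.sqrt_le_div_sqrt_add_sqrt {a x δ : ℝ} (ha : 0 ≤ a) (hax : a ≤ x) (hδ : 0 < δ) :
    √x ≤ x / √(a + δ) + √δ := by
  have hs : 0 < √(a + δ) := Real.sqrt_pos.2 (by linarith)
  have hsδ : √δ ≤ √(a + δ) := Real.sqrt_le_sqrt (by linarith)
  have hr := Real.sqrt_nonneg x
  have hrx := Real.sq_sqrt (ha.trans hax)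
  have hsa := Real.sq_sqrt (by linarith : 0 ≤ a + δ)
  have hd := Real.sq_sqrt hδ.le
  rw [div_add' _ _ _ hs.ne', le_div_iff₀ hs]
  -- if `√x < √(a + δ)`: `√x (√(a + δ) - √x) ≤ (a + δ) - x ≤ δ ≤ √δ √(a + δ)`
  rcases le_total (√(a + δ)) (√x) with h | h
  · nlinarith [Real.sqrt_nonneg δ]
  · nlinarith [Real.sqrt_nonneg δ]

theorem integral_div_two_sqrt_add_eq {E I : ℝ → ℝ} {ε T : ℝ}
    (hE0 : ∀ t, 0 ≤ t → 0 ≤ E t) (hint : ∀ t, 0 ≤ t → IntegrableOn I (Icc 0 t))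
    (hrep : ∀ t, 0 ≤ t → E t = E 0 - ∫ r in (0:ℝ)..t, I r) (hε : 0 < ε) (hT : 0 ≤ T) :
    ∫ t in (0:ℝ)..T, I t / (2 * √(E t + ε)) = √(E 0 + ε) - √(E T + ε) := by
  have hI : IntervalIntegrable I volume 0 T :=
    (intervalIntegrable_iff_integrableOn_Icc_of_le hT).2 (hint T hT)
  have hφ : LipschitzOnWith _ (fun y => √(E 0 + ε - y)) (Iic (E 0)) :=
    (Real.lipschitzOnWith_sqrt_Ici hε).comp
      (IsometryEquiv.subLeft (E 0 + ε)).isometry.lipschitz.lipschitzOnWith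
      fun y hy => by simp only [mem_Ici]; linarith [mem_Iic.1 hy]
  have hφ' : ∀ y ∈ Iic (E 0),
      HasDerivAt (fun y => √(E 0 + ε - y)) (-1 / (2 * √(E 0 + ε - y))) y := fun y hy =>
    ((hasDerivAt_id y).const_sub _).sqrt (by simp only [id]; linarith [mem_Iic.1 hy])
  have hE : ∀ t ∈ uIcc 0 T, E 0 + ε - ∫ r in (0:ℝ)..t, I r = E t + ε := fun t ht => by
    rw [hrep t (uIcc_of_le hT ▸ ht).1]; ring
  have hs : ∀ t ∈ uIcc 0 T, ∫ r in (0:ℝ)..t, I r ∈ Iic (E 0) := fun t ht =>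
    mem_Iic.2 (by linarith [hE t ht, hE0 t (uIcc_of_le hT ▸ ht).1])
  have hchain := intervalIntegral.integral_comp_primitive_mul_eq_sub hφ hφ' hI hs
  rw [sub_zero, hE T right_mem_uIcc] at hchain
  rw [← neg_sub, ← hchain, ← intervalIntegral.integral_neg]
  refine intervalIntegral.integral_congr fun t ht => ?_
  simp only [hE t ht]
  ring

theorem Real.sqrt_le_of_two_mul_le {K e x ε : ℝ} (hK : 0 < K) (he : 0 ≤ e)
    (hx : 2 * K * e ≤ x) (hε : 0 < ε) : √x ≤ √(2 / K) * (x / (2 * √(e + ε))) + √(2 * K * ε) := by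
  have hscale : √(2 / K) * √(2 * K * e + 2 * K * ε) = 2 * √(e + ε) := by
    rw [← Real.sqrt_mul (by positivity),
      show 2 / K * (2 * K * e + 2 * K * ε) = 2 ^ 2 * (e + ε) by field_simp,
      Real.sqrt_mul (by positivity), Real.sqrt_sq (by norm_num)]
  calc √x ≤ x / √(2 * K * e + 2 * K * ε) + √(2 * K * ε) :=
        Real.sqrt_le_div_sqrt_add_sqrt (by positivity) hx (by positivity)
    _ = √(2 / K) * (x / (2 * √(e + ε))) + √(2 * K * ε) := by
        rw [← hscale]
        field_simp

theorem intervalIntegral_sqrt_le_add {K ε T : ℝ} {E I : ℝ → ℝ} (hK : 0 < K)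
    (hE0 : ∀ t, 0 ≤ t → 0 ≤ E t) (hint : ∀ t, 0 ≤ t → IntegrableOn I (Icc 0 t))
    (hrep : ∀ t, 0 ≤ t → E t = E 0 - ∫ r in (0:ℝ)..t, I r)
    (hLSI : ∀ᵐ t ∂(volume.restrict (Ici (0:ℝ))), E t ≤ I t / (2 * K)) (hε : 0 < ε)
    (hT : 0 ≤ T) :
    ∫ t in (0:ℝ)..T, √(I t) ≤ √(2 / K) * √(E 0 + ε) + T * √(2 * K * ε) := by
  have hEcont : ContinuousOn E (uIcc 0 T) := by
    have hF := intervalIntegral.continuousOn_primitive_interval (μ := volume) (a := 0) (b := T)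
      (f := I) (by rw [uIcc_of_le hT]; exact hint T hT)
    exact (continuousOn_const.sub hF).congr fun t ht => hrep t (uIcc_of_le hT ▸ ht).1
  have hg : IntervalIntegrable (fun t => I t / (2 * √(E t + ε))) volume 0 T := by
    simp_rw [div_eq_mul_inv]
    refine ((intervalIntegrable_iff_integrableOn_Icc_of_le hT).2 (hint T hT)).mul_continuousOn
      ((continuousOn_const.mul (hEcont.add continuousOn_const).sqrt).inv₀ fun t ht => ?_)
    have : 0 < E t + ε := by linarith [hE0 t (uIcc_of_le hT ▸ ht).1]
    exact (mul_pos two_pos (Real.sqrt_pos.2 this)).ne'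
  have hbound : ∀ᵐ t ∂(volume.restrict (Ioc 0 T)),
      √(I t) ≤ √(2 / K) * (I t / (2 * √(E t + ε))) + √(2 * K * ε) := by
    filter_upwards [ae_restrict_of_ae_restrict_of_subset
      (Ioc_subset_Ioi_self.trans Ioi_subset_Ici_self) hLSI, ae_restrict_mem measurableSet_Ioc]
      with t hLSIt ht
    exact Real.sqrt_le_of_two_mul_le hK (hE0 t ht.1.le)
      (by rwa [le_div_iff₀ (by positivity), mul_comm] at hLSIt) hε
  calc ∫ t in (0:ℝ)..T, √(I t)
      ≤ ∫ t in (0:ℝ)..T, (√(2 / K) * (I t / (2 * √(E t + ε))) + √(2 * K * ε)) := by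
        simp only [intervalIntegral.integral_of_le hT]
        exact integral_mono_of_nonneg (Eventually.of_forall fun _ => Real.sqrt_nonneg _)
          ((hg.const_mul _).add intervalIntegrable_const).1 hbound
    _ = √(2 / K) * (√(E 0 + ε) - √(E T + ε)) + T * √(2 * K * ε) := by
        rw [intervalIntegral.integral_add (hg.const_mul _) intervalIntegrable_const,
          intervalIntegral.integral_const_mul, integral_div_two_sqrt_add_eq hE0 hint hrep hε hT]
        simp
    _ ≤ √(2 / K) * √(E 0 + ε) + T * √(2 * K * ε) := by
        gcongr
        exact sub_le_self _ (Real.sqrt_nonneg _)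

theorem intervalIntegral_sqrt_le {K T : ℝ} {E I : ℝ → ℝ} (hK : 0 < K)
    (hE0 : ∀ t, 0 ≤ t → 0 ≤ E t) (hint : ∀ t, 0 ≤ t → IntegrableOn I (Icc 0 t))
    (hrep : ∀ t, 0 ≤ t → E t = E 0 - ∫ r in (0:ℝ)..t, I r)
    (hLSI : ∀ᵐ t ∂(volume.restrict (Ici (0:ℝ))), E t ≤ I t / (2 * K)) (hT : 0 ≤ T) :
    ∫ t in (0:ℝ)..T, √(I t) ≤ √(2 / K) * √(E 0) := by
  have hlim : Tendsto (fun ε => √(2 / K) * √(E 0 + ε) + T * √(2 * K * ε)) (𝓝[>] 0)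
      (𝓝 (√(2 / K) * √(E 0))) := by
    have : Continuous fun ε => √(2 / K) * √(E 0 + ε) + T * √(2 * K * ε) := by fun_prop
    simpa using this.continuousWithinAt.tendsto (x := 0) (s := Ioi 0)
  exact ge_of_tendsto hlim (eventually_nhdsWithin_of_forall fun ε hε =>
    intervalIntegral_sqrt_le_add hK hE0 hint hrep hLSI hε hT)

theorem stmt_16_general (K : ℝ) (hK : 0 < K) (E I : ℝ → ℝ)
    (hE0 : ∀ t, 0 ≤ t → 0 ≤ E t)
    (hint : ∀ t, 0 ≤ t → IntegrableOn I (Set.Icc 0 t))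
    (hrep : ∀ t, 0 ≤ t → E t = E 0 - ∫ r in (0:ℝ)..t, I r)
    (hLSI : ∀ᵐ t ∂(volume.restrict (Set.Ici (0:ℝ))), E t ≤ I t / (2 * K)) :
    ∫ t in Set.Ioi (0:ℝ), Real.sqrt (I t) ≤ Real.sqrt (2 / K) * Real.sqrt (E 0) := by
  by_cases hInt : IntegrableOn (fun t => √(I t)) (Ioi 0)
  · exact le_of_tendsto (intervalIntegral_tendsto_integral_Ioi 0 hInt tendsto_id)
      (eventually_ge_atTop 0 |>.mono fun T hT => intervalIntegral_sqrt_le hK hE0 hint hrep hLSI hT)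
  · -- the Bochner integral of a non-integrable function is `0`
    rw [integral_undef hInt]
    positivity

theorem stmt_16 (K : ℝ) (hK : 0 < K) (E I : ℝ → ℝ)
    (hE0 : ∀ t, 0 ≤ t → 0 ≤ E t) (hI0 : ∀ t, 0 ≤ t → 0 ≤ I t)
    (hanti : AntitoneOn E (Set.Ici 0))
    (hint : ∀ t, 0 ≤ t → IntegrableOn I (Set.Icc 0 t))
    (hrep : ∀ t, 0 ≤ t → E t = E 0 - ∫ r in (0:ℝ)..t, I r)
    (hLSI : ∀ᵐ t ∂(volume.restrict (Set.Ici (0:ℝ))), E t ≤ I t / (2 * K))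
    (hlim : Filter.Tendsto E Filter.atTop (nhds 0)) :
    ∫ t in Set.Ioi (0:ℝ), Real.sqrt (I t) ≤ Real.sqrt (2 / K) * Real.sqrt (E 0) :=
  stmt_16_general K hK E I hE0 hint hrep hLSI
end

section
/- For a finite measure space (X, μ) and a convex C¹ Lipschitz function f : ℝ → ℝ, if ρ : I → L¹(X, μ) (real-valued) is a differentiable curve (in L¹ norm) then t ↦ ∫ f(ρ_t) dμ is locally absolutely continuous with derivative ∫ f'(ρ_t) ρ̇_t dμ for a.e. t ∈ I. -/
/-!
Write `F u = ∫ f (ρ u)`. Since `f` is `L`-Lipschitz, `|∫ f ∘ g₁ - ∫ f ∘ g₂| ≤ L ‖g₁ - g₂‖₁`, so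
`F u` differs from the linearisation `G (u - t) = ∫ f (ρ t + (u - t) ρ' t)` by at most
`L ‖ρ u - ρ t - (u - t) ρ' t‖₁ = o(u - t)`. Differentiating under the integral sign (the
difference quotients are dominated by `L |ρ' t|`) gives `G' 0 = ∫ f' (ρ t) ρ' t`. Hence `F` is
differentiable within `I` at every point of `I`, so continuous on `I` and differentiable at
every interior point; the frontier of an interval is a null set.
-/

open MeasureTheory Filter Topology

section

variable {X : Type*} [MeasurableSpace X] {μ : Measure X} [IsFiniteMeasure μ] {f : ℝ → ℝ}
  {L : NNReal}

theorem LipschitzWith.integrable_comp (hf : LipschitzWith L f) {g : X → ℝ}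
    (hg : Integrable g μ) : Integrable (fun x => f (g x)) μ := by
  refine ((integrable_const |f 0|).add (hg.abs.const_mul L)).mono'
    (hf.continuous.comp_aestronglyMeasurable hg.1) (Eventually.of_forall fun x => ?_)
  have := hf.dist_le_mul (g x) 0
  simp only [Real.dist_eq, sub_zero] at this
  simp only [Pi.add_apply, Real.norm_eq_abs]
  linarith [abs_sub_abs_le_abs_sub (f (g x)) (f 0)]

theorem LipschitzWith.abs_integral_comp_sub_le (hf : LipschitzWith L f) {g₁ g₂ : X → ℝ}
    (hg₁ : Integrable g₁ μ) (hg₂ : Integrable g₂ μ) :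
    |∫ x, f (g₁ x) ∂μ - ∫ x, f (g₂ x) ∂μ| ≤ L * ∫ x, |g₁ x - g₂ x| ∂μ := by
  rw [← integral_sub (hf.integrable_comp hg₁) (hf.integrable_comp hg₂), ← integral_const_mul]
  refine abs_integral_le_integral_abs.trans <| integral_mono
    ((hf.integrable_comp hg₁).sub (hf.integrable_comp hg₂)).abs
    ((hg₁.sub hg₂).abs.const_mul _) fun x => ?_
  simpa only [Real.dist_eq] using hf.dist_le_mul (g₁ x) (g₂ x)

theorem hasDerivAt_integral_comp_add_mul (hf : LipschitzWith L f) (hdf : Differentiable ℝ f)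
    {g v : X → ℝ} (hg : Integrable g μ) (hv : Integrable v μ) :
    HasDerivAt (fun h => ∫ x, f (g x + h * v x) ∂μ) (∫ x, deriv f (g x) * v x ∂μ) 0 := by
  refine (hasDerivAt_integral_of_dominated_loc_of_lip (bound := fun x => L * |v x|)
    univ_mem (Eventually.of_forall fun h => ?_) ?_ ?_ ?_ (hv.abs.const_mul _) ?_).2
  · exact (hf.integrable_comp (hg.add (hv.const_mul h))).1
  · simpa using hf.integrable_comp hg
  · exact ((measurable_deriv f).comp_aemeasurable hg.1.aemeasurable).aestronglyMeasurable.mul hv.1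
  · refine Eventually.of_forall fun x => LipschitzOnWith.mono ?_ (Set.subset_univ _)
    rw [lipschitzOnWith_univ]
    refine LipschitzWith.of_dist_le_mul fun h₁ h₂ => ?_
    rw [Real.coe_nnabs, abs_of_nonneg (by positivity), mul_assoc]
    calc dist (f (g x + h₁ * v x)) (f (g x + h₂ * v x))
        ≤ L * dist (g x + h₁ * v x) (g x + h₂ * v x) := hf.dist_le_mul _ _
      _ = L * (|v x| * dist h₁ h₂) := by
        simp only [Real.dist_eq, add_sub_add_left_eq_sub, ← sub_mul, abs_mul, mul_comm]
  · refine Eventually.of_forall fun x => ?_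
    have hline : HasDerivAt (fun h : ℝ => g x + h * v x) (v x) 0 := by
      simpa using ((hasDerivAt_id 0).mul_const (v x)).const_add (g x)
    exact (hdf (g x)).hasDerivAt.comp_of_eq 0 hline (by simp)

theorem hasDerivWithinAt_integral_comp (hf : LipschitzWith L f) (hdf : Differentiable ℝ f)
    {ρ : ℝ → X → ℝ} {ρ' : X → ℝ} {s : Set ℝ} {t : ℝ} (hρ : ∀ u ∈ s, Integrable (ρ u) μ)
    (ht : t ∈ s) (hρ' : Integrable ρ' μ)
    (hderiv : Tendsto (fun h => ∫ x, |(ρ (t + h) x - ρ t x) / h - ρ' x| ∂μ) (𝓝[≠] 0) (𝓝 0)) :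
    HasDerivWithinAt (fun u => ∫ x, f (ρ u x) ∂μ) (∫ x, deriv f (ρ t x) * ρ' x ∂μ) s t := by
  set G := fun h => ∫ x, f (ρ t x + h * ρ' x) ∂μ
  have hG : HasDerivAt (fun u => G (u - t)) (∫ x, deriv f (ρ t x) * ρ' x ∂μ) t :=
    HasDerivAt.comp_sub_const t t <| by
      simpa only [sub_self] using hasDerivAt_integral_comp_add_mul hf hdf (hρ t ht) hρ'
  have hshift : Tendsto (fun u => u - t) (𝓝[s \ {t}] t) (𝓝[≠] 0) := by
    refine tendsto_nhdsWithin_of_tendsto_nhds_of_eventually_within _ ?_ ?_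
    · simpa using ((continuous_sub_right t).tendsto t).mono_left nhdsWithin_le_nhds
    · filter_upwards [self_mem_nhdsWithin] with u hu
      exact sub_ne_zero.2 hu.2
  rw [hasDerivWithinAt_iff_tendsto_slope]
  refine (hasDerivWithinAt_iff_tendsto_slope.1 hG.hasDerivWithinAt).congr_dist ?_
  refine squeeze_zero' (Eventually.of_forall fun u => dist_nonneg) ?_
    (by simpa using (hderiv.comp hshift).const_mul (L : ℝ))
  filter_upwards [self_mem_nhdsWithin] with u ⟨hu, hut⟩
  have hG₀ : G (t - t) = ∫ x, f (ρ t x) ∂μ := by simp [G]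
  have hut' : u - t ≠ 0 := sub_ne_zero.2 hut
  simp only [slope_def_field]
  calc _ = |∫ x, f (ρ u x) ∂μ - G (u - t)| / |u - t| := by
        rw [hG₀, Real.dist_eq, ← sub_div, abs_div, sub_sub_sub_cancel_right, abs_sub_comm]
    _ ≤ L * (∫ x, |ρ u x - (ρ t x + (u - t) * ρ' x)| ∂μ) / |u - t| := by
        gcongr
        exact hf.abs_integral_comp_sub_le (hρ u hu) ((hρ t ht).add (hρ'.const_mul _))
    _ = L * ∫ x, |(ρ u x - ρ t x) / (u - t) - ρ' x| ∂μ := by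
        rw [mul_div_assoc, ← integral_div]
        congr 2 with x
        rw [← abs_div]
        congr 1
        field_simp
        ring

end

theorem Set.OrdConnected.ae_restrict_mem_interior {I : Set ℝ} (hI : I.OrdConnected) :
    ∀ᵐ t ∂volume.restrict I, t ∈ interior I := by
  have hfrontier := Convex.addHaar_frontier volume (convex_iff_ordConnected.2 hI)
  rw [← Measure.restrict_congr_set (interior_ae_eq_of_null_frontier hfrontier)]
  exact ae_restrict_mem measurableSet_interior

theorem stmt_17_general {X : Type*} [MeasurableSpace X] (μ : Measure X) [IsFiniteMeasure μ]
    (f : ℝ → ℝ) (hC1 : ContDiff ℝ 1 f)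
    (L : NNReal) (hLip : LipschitzWith L f)
    (I : Set ℝ) (hI : I.OrdConnected)
    (ρ ρ' : ℝ → X → ℝ)
    (hint : ∀ t ∈ I, Integrable (ρ t) μ ∧ Integrable (ρ' t) μ)
    (hderiv : ∀ t ∈ I, Filter.Tendsto
      (fun h : ℝ => ∫ x, |(ρ (t + h) x - ρ t x) / h - ρ' t x| ∂μ)
      (nhdsWithin 0 {(0:ℝ)}ᶜ) (nhds 0)) :
    ContinuousOn (fun t => ∫ x, f (ρ t x) ∂μ) I ∧
      ∀ᵐ t ∂(volume.restrict I),
        HasDerivAt (fun u => ∫ x, f (ρ u x) ∂μ) (∫ x, deriv f (ρ t x) * ρ' t x ∂μ) t := by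
  have hF : ∀ t ∈ I, HasDerivWithinAt (fun u => ∫ x, f (ρ u x) ∂μ)
      (∫ x, deriv f (ρ t x) * ρ' t x ∂μ) I t := fun t ht =>
    hasDerivWithinAt_integral_comp hLip (hC1.differentiable one_ne_zero)
      (fun u hu => (hint u hu).1) ht (hint t ht).2 (hderiv t ht)
  refine ⟨fun t ht => (hF t ht).continuousWithinAt, ?_⟩
  filter_upwards [hI.ae_restrict_mem_interior] with t ht
  exact (hF t (interior_subset ht)).hasDerivAt (mem_interior_iff_mem_nhds.1 ht)

theorem stmt_17 {X : Type*} [MeasurableSpace X] (μ : Measure X) [IsFiniteMeasure μ]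
    (f : ℝ → ℝ) (hconv : ConvexOn ℝ Set.univ f) (hC1 : ContDiff ℝ 1 f)
    (L : NNReal) (hLip : LipschitzWith L f)
    (I : Set ℝ) (hI : I.OrdConnected)
    (ρ ρ' : ℝ → X → ℝ)
    (hint : ∀ t ∈ I, Integrable (ρ t) μ ∧ Integrable (ρ' t) μ)
    (hderiv : ∀ t ∈ I, Filter.Tendsto
      (fun h : ℝ => ∫ x, |(ρ (t + h) x - ρ t x) / h - ρ' t x| ∂μ)
      (nhdsWithin 0 {(0:ℝ)}ᶜ) (nhds 0)) :
    ContinuousOn (fun t => ∫ x, f (ρ t x) ∂μ) I ∧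
      ∀ᵐ t ∂(volume.restrict I),
        HasDerivAt (fun u => ∫ x, f (ρ u x) ∂μ) (∫ x, deriv f (ρ t x) * ρ' t x ∂μ) t :=
  stmt_17_general μ f hC1 L hLip I hI ρ ρ' hint hderiv
end
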